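/- arXiv:1905.03667 — 2 statements merged into one kernel-verified Lean document; each statement's English description precedes it below -/
import Mathlib

section
/- Let R > 0 and 0 < m₀ ≤ ζ. If φ₁ and φ₂ both belong to C¹([0,R]) ∩ C²((0,R)) and both satisfy (1/r)(r φ'(r))' − φ(r)/r² + (m₀ − ζ) φ(r) = m₀ r on (0,R) with φ(0) = 0 and φ(R) = 0, then φ₁ = φ₂ on [0,R]. -/
/-!
Uniqueness is a maximum principle for `ψ ↦ (1/r)(r ψ')' − ψ/r² + κ ψ` with `κ = m₀ − ζ ≤ 0`,
applied to `±(φ₁ − φ₂)`, which solve the homogeneous equation with zero boundary values.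
At a positive interior maximum `r₀` of `ψ` we have `ψ'(r₀) = 0` and `ψ''(r₀) ≤ 0`, so
`(1/r)(r ψ')' = ψ''` there and every term of the operator is `≤ 0`, with `−ψ/r² < 0`;
hence the operator cannot vanish.
-/
open Set Filter Topology

theorem IsLocalMax.deriv_deriv_nonpos {f : ℝ → ℝ} {a : ℝ} (h : IsLocalMax f a)
    (hc : ContinuousAt f a) : deriv (deriv f) a ≤ 0 := by
  -- if `f'' a > 0`, the second-derivative test makes `a` also a local minimum
  by_contra! hpos
  have hmin : IsLocalMin f a := isLocalMin_of_deriv_deriv_pos hpos h.deriv_eq_zero hc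
  have hconst : f =ᶠ[𝓝 a] fun _ => f a := by
    filter_upwards [h, hmin] with x hmax hmin' using le_antisymm hmax hmin'
  have hderiv : deriv f =ᶠ[𝓝 a] fun _ => 0 := by
    simpa using hconst.deriv
  simp [hderiv.deriv_eq] at hpos

noncomputable def besselOperator (κ : ℝ) (ψ : ℝ → ℝ) (r : ℝ) : ℝ :=
  deriv (fun s => s * deriv ψ s) r / r - ψ r / r ^ 2 + κ * ψ r

theorem ContDiffAt.differentiableAt_deriv {f : ℝ → ℝ} {x : ℝ} (h : ContDiffAt ℝ 2 f x) :
    DifferentiableAt ℝ (deriv f) x :=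
  (h.derivWithin (m := 1) (by norm_num)).differentiableAt one_ne_zero

theorem deriv_mul_deriv_of_deriv_eq_zero {ψ : ℝ → ℝ} {r : ℝ}
    (hψ : DifferentiableAt ℝ (deriv ψ) r) (h0 : deriv ψ r = 0) :
    deriv (fun s => s * deriv ψ s) r = r * deriv (deriv ψ) r := by
  rw [deriv_fun_mul differentiableAt_fun_id hψ, h0]
  simp

theorem besselOperator_neg_of_isLocalMax {κ : ℝ} {ψ : ℝ → ℝ} {r : ℝ} (hκ : κ ≤ 0) (hr : 0 < r)
    (hψ : ContDiffAt ℝ 2 ψ r) (hmax : IsLocalMax ψ r) (hpos : 0 < ψ r) :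
    besselOperator κ ψ r < 0 := by
  have hrad : deriv (fun s => s * deriv ψ s) r = r * deriv (deriv ψ) r :=
    deriv_mul_deriv_of_deriv_eq_zero hψ.differentiableAt_deriv hmax.deriv_eq_zero
  have hsecond : deriv (deriv ψ) r ≤ 0 := hmax.deriv_deriv_nonpos hψ.continuousAt
  rw [besselOperator, hrad, mul_div_cancel_left₀ _ hr.ne']
  have : 0 < ψ r / r ^ 2 := by positivity
  nlinarith

theorem besselOperator_sub {κ : ℝ} {f g : ℝ → ℝ} {r : ℝ} (hf : ContDiffAt ℝ 2 f r)
    (hg : ContDiffAt ℝ 2 g r) :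
    besselOperator κ (f - g) r = besselOperator κ f r - besselOperator κ g r := by
  have hderiv : deriv (f - g) =ᶠ[𝓝 r] deriv f - deriv g := by
    filter_upwards [hf.eventually (by simp), hg.eventually (by simp)] with s hfs hgs
    exact deriv_sub (hfs.differentiableAt (by simp)) (hgs.differentiableAt (by simp))
  have hrad : (fun s => s * deriv (f - g) s) =ᶠ[𝓝 r]
      fun s => s * deriv f s - s * deriv g s := by
    filter_upwards [hderiv] with s hs
    rw [hs, Pi.sub_apply, mul_sub]
  rw [besselOperator, besselOperator, besselOperator, hrad.deriv_eq,
    deriv_fun_sub (differentiableAt_fun_id.fun_mul hf.differentiableAt_deriv)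
      (differentiableAt_fun_id.fun_mul hg.differentiableAt_deriv)]
  simp only [Pi.sub_apply]
  ring

theorem nonpos_of_besselOperator_nonneg {κ a b : ℝ} {ψ : ℝ → ℝ} (hκ : κ ≤ 0) (ha : 0 ≤ a)
    (hc : ContinuousOn ψ (Icc a b)) (hψ : ContDiffOn ℝ 2 ψ (Ioo a b))
    (hsub : ∀ r ∈ Ioo a b, 0 ≤ besselOperator κ ψ r) (hψa : ψ a ≤ 0) (hψb : ψ b ≤ 0) :
    ∀ r ∈ Icc a b, ψ r ≤ 0 := by
  by_contra! ⟨r₁, hr₁, hpos⟩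
  obtain ⟨r₀, hr₀, hmax⟩ := isCompact_Icc.exists_isMaxOn ⟨r₁, hr₁⟩ hc
  have hψr₀ : 0 < ψ r₀ := hpos.trans_le (hmax hr₁)
  have hr₀' : r₀ ∈ Ioo a b :=
    ⟨hr₀.1.lt_of_ne (by rintro rfl; linarith), hr₀.2.lt_of_ne (by rintro rfl; linarith)⟩
  have hlocal : IsLocalMax ψ r₀ := hmax.isLocalMax (Icc_mem_nhds hr₀'.1 hr₀'.2)
  have hneg := besselOperator_neg_of_isLocalMax hκ (ha.trans_lt hr₀'.1)
    (hψ.contDiffAt (isOpen_Ioo.mem_nhds hr₀')) hlocal hψr₀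
  linarith [hsub r₀ hr₀']

theorem le_of_besselOperator_le {κ a b : ℝ} {f g : ℝ → ℝ} (hκ : κ ≤ 0) (ha : 0 ≤ a)
    (hfc : ContinuousOn f (Icc a b)) (hf : ContDiffOn ℝ 2 f (Ioo a b))
    (hgc : ContinuousOn g (Icc a b)) (hg : ContDiffOn ℝ 2 g (Ioo a b))
    (hle : ∀ r ∈ Ioo a b, besselOperator κ g r ≤ besselOperator κ f r)
    (hfa : f a ≤ g a) (hfb : f b ≤ g b) :
    ∀ r ∈ Icc a b, f r ≤ g r := by
  have hsub : ∀ r ∈ Ioo a b, 0 ≤ besselOperator κ (f - g) r := fun r hr => by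
    rw [besselOperator_sub (hf.contDiffAt (isOpen_Ioo.mem_nhds hr))
      (hg.contDiffAt (isOpen_Ioo.mem_nhds hr)), sub_nonneg]
    exact hle r hr
  have hnonpos := nonpos_of_besselOperator_nonneg hκ ha (hfc.sub hgc) (hf.sub hg) hsub
    (sub_nonpos.2 hfa) (sub_nonpos.2 hfb)
  exact fun r hr => sub_nonpos.1 (hnonpos r hr)

theorem eqOn_of_besselOperator_eq {κ a b : ℝ} {f g : ℝ → ℝ} (hκ : κ ≤ 0) (ha : 0 ≤ a)
    (hfc : ContinuousOn f (Icc a b)) (hf : ContDiffOn ℝ 2 f (Ioo a b))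
    (hgc : ContinuousOn g (Icc a b)) (hg : ContDiffOn ℝ 2 g (Ioo a b))
    (heq : ∀ r ∈ Ioo a b, besselOperator κ f r = besselOperator κ g r)
    (hfa : f a = g a) (hfb : f b = g b) :
    EqOn f g (Icc a b) := fun r hr =>
  le_antisymm
    (le_of_besselOperator_le hκ ha hfc hf hgc hg (fun r hr => (heq r hr).ge) hfa.le hfb.le r hr)
    (le_of_besselOperator_le hκ ha hgc hg hfc hf (fun r hr => (heq r hr).le) hfa.ge hfb.ge r hr)

theorem bifCond1_uniqueness_general
    (R ζ m₀ : ℝ) (hmζ : m₀ ≤ ζ)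
    (φ₁ φ₂ : ℝ → ℝ)
    (h11 : ContDiffOn ℝ 1 φ₁ (Set.Icc 0 R)) (h12 : ContDiffOn ℝ 2 φ₁ (Set.Ioo 0 R))
    (h21 : ContDiffOn ℝ 1 φ₂ (Set.Icc 0 R)) (h22 : ContDiffOn ℝ 2 φ₂ (Set.Ioo 0 R))
    (hode1 : ∀ r ∈ Set.Ioo (0:ℝ) R,
      deriv (fun s => s * deriv φ₁ s) r / r - φ₁ r / r^2 + (m₀ - ζ) * φ₁ r = m₀ * r)
    (hode2 : ∀ r ∈ Set.Ioo (0:ℝ) R,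
      deriv (fun s => s * deriv φ₂ s) r / r - φ₂ r / r^2 + (m₀ - ζ) * φ₂ r = m₀ * r)
    (h10 : φ₁ 0 = 0) (h1R : φ₁ R = 0) (h20 : φ₂ 0 = 0) (h2R : φ₂ R = 0) :
    ∀ r ∈ Set.Icc (0:ℝ) R, φ₁ r = φ₂ r :=
  eqOn_of_besselOperator_eq (sub_nonpos.2 hmζ) le_rfl h11.continuousOn h12 h21.continuousOn h22
    (fun r hr => (hode1 r hr).trans (hode2 r hr).symm) (h10.trans h20.symm) (h1R.trans h2R.symm)

/-- Let `R > 0` and `0 < m₀ ≤ ζ`. If `φ₁` and `φ₂` both belong to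
`C¹([0,R]) ∩ C²((0,R))` and both satisfy
`(1/r)(r φ'(r))' − φ(r)/r² + (m₀ − ζ) φ(r) = m₀ r` on `(0,R)` with `φ(0) = 0` and `φ(R) = 0`,
then `φ₁ = φ₂` on `[0,R]`. -/
theorem bifCond1_uniqueness
    (R ζ m₀ : ℝ) (hR : 0 < R) (hm₀ : 0 < m₀) (hmζ : m₀ ≤ ζ)
    (φ₁ φ₂ : ℝ → ℝ)
    (h11 : ContDiffOn ℝ 1 φ₁ (Set.Icc 0 R)) (h12 : ContDiffOn ℝ 2 φ₁ (Set.Ioo 0 R))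
    (h21 : ContDiffOn ℝ 1 φ₂ (Set.Icc 0 R)) (h22 : ContDiffOn ℝ 2 φ₂ (Set.Ioo 0 R))
    (hode1 : ∀ r ∈ Set.Ioo (0:ℝ) R,
      deriv (fun s => s * deriv φ₁ s) r / r - φ₁ r / r^2 + (m₀ - ζ) * φ₁ r = m₀ * r)
    (hode2 : ∀ r ∈ Set.Ioo (0:ℝ) R,
      deriv (fun s => s * deriv φ₂ s) r / r - φ₂ r / r^2 + (m₀ - ζ) * φ₂ r = m₀ * r)
    (h10 : φ₁ 0 = 0) (h1R : φ₁ R = 0) (h20 : φ₂ 0 = 0) (h2R : φ₂ R = 0) :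
    ∀ r ∈ Set.Icc (0:ℝ) R, φ₁ r = φ₂ r :=
  bifCond1_uniqueness_general R ζ m₀ hmζ φ₁ φ₂ h11 h12 h21 h22 hode1 hode2 h10 h1R h20 h2R
end

section
/- Let R > 0 and ζ > 0. For every w ∈ C¹(B̄_R;ℝ) with ∫_{B_R} w dxdy = 0 and w(x) = 1 for every x with |x| = R, one has ∫_{B_R} |∇w|² dxdy + ζ ∫_{B_R} w² dxdy ≥ 2π √ζ R. -/
/-!
Shifting `w` by a constant `c` costs exactly `ζ c² |B_R|` because `⟨w⟩ = 0`. Along each ray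
`r ↦ r • u` put `φ r = w (r • u) - c`; if `q` satisfies the Riccati inequality
`r q' + q² ≤ ζ r²` and `q 0 = 0`, completing the square gives `(q φ²)' ≤ r (φ'² + ζ φ²)`, hence
`q R (1 - c)² ≤ ∫₀ᴿ r (φ'² + ζ φ²) dr`. The rational supersolution `q r = ζ r² / (√ζ r + 2)`
and `c = -2 / (√ζ R)` give `2π (√ζ R + 2)` after integrating over directions, and the shift
costs `4π`.
-/

open MeasureTheory Metric Set Topology

theorem calibration_deriv_le_of_riccati {ζ r q q' φ φ' : ℝ} (hr : 0 < r)
    (hq : r * q' + q ^ 2 ≤ ζ * r ^ 2) :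
    q' * φ ^ 2 + 2 * q * φ * φ' ≤ r * (φ' ^ 2 + ζ * φ ^ 2) := by
  have hsq : r * (r * (φ' ^ 2 + ζ * φ ^ 2) - (q' * φ ^ 2 + 2 * q * φ * φ'))
      = (r * φ' - q * φ) ^ 2 + (ζ * r ^ 2 - (r * q' + q ^ 2)) * φ ^ 2 := by ring
  have hgap := sub_nonneg.2 hq
  have : 0 ≤ r * (r * (φ' ^ 2 + ζ * φ ^ 2) - (q' * φ ^ 2 + 2 * q * φ * φ')) := by
    rw [hsq]; positivity
  linarith [(mul_nonneg_iff_of_pos_left hr).1 this]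

theorem sub_le_integral_of_riccati {ζ a b : ℝ} (ha : 0 ≤ a) (hab : a ≤ b)
    {φ φ' q q' : ℝ → ℝ} (hφ : ContinuousOn φ (Icc a b)) (hφ' : ContinuousOn φ' (Icc a b))
    (hq : ContinuousOn q (Icc a b)) (hq' : ContinuousOn q' (Icc a b))
    (hφd : ∀ r ∈ Ioo a b, HasDerivAt φ (φ' r) r) (hqd : ∀ r ∈ Ioo a b, HasDerivAt q (q' r) r)
    (hric : ∀ r ∈ Ioo a b, r * q' r + q r ^ 2 ≤ ζ * r ^ 2) :
    q b * φ b ^ 2 - q a * φ a ^ 2 ≤ ∫ r in a..b, r * (φ' r ^ 2 + ζ * φ r ^ 2) := by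
  have hint : IntervalIntegrable (fun r => q' r * φ r ^ 2 + 2 * q r * φ r * φ' r) volume a b :=
    ((hq'.mul (hφ.pow 2)).add (((continuousOn_const.mul hq).mul hφ).mul hφ'))
      |>.intervalIntegrable_of_Icc hab
  have hftc : ∫ r in a..b, (q' r * φ r ^ 2 + 2 * q r * φ r * φ' r)
      = q b * φ b ^ 2 - q a * φ a ^ 2 :=
    intervalIntegral.integral_eq_sub_of_hasDerivAt_of_le hab (hq.mul (hφ.pow 2))
      (fun r hr => ((hqd r hr).mul ((hφd r hr).pow 2)).congr_deriv
        (by simp only [Pi.pow_apply]; ring)) hint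
  rw [← hftc]
  refine intervalIntegral.integral_mono_on_of_le_Ioo hab hint ?_
    fun r hr => calibration_deriv_le_of_riccati (ha.trans_lt hr.1) (hric r hr)
  exact (continuousOn_id.mul ((hφ'.pow 2).add (continuousOn_const.mul (hφ.pow 2))))
    |>.intervalIntegrable_of_Icc hab

/-- A rational supersolution of `r q' + q² ≤ ζ r²`, `q 0 = 0`; the exact solution
`√ζ r I₁(√ζ r) / I₀(√ζ r)` is what makes the paper's value of `Q` a Bessel-function expression. -/
noncomputable def radialCalibration (ζ r : ℝ) : ℝ := ζ * r ^ 2 / (√ζ * r + 2)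

theorem hasDerivAt_radialCalibration {ζ r : ℝ} (hr : 0 ≤ r) :
    HasDerivAt (radialCalibration ζ) (ζ * r * (√ζ * r + 4) / (√ζ * r + 2) ^ 2) r := by
  have hnum : HasDerivAt (fun s => ζ * s ^ 2) (ζ * (2 * r)) r := by
    simpa using (hasDerivAt_pow 2 r).const_mul ζ
  have hden : HasDerivAt (fun s => √ζ * s + 2) √ζ r := by
    simpa using ((hasDerivAt_id r).const_mul √ζ).add_const 2
  refine (hnum.fun_div hden (by positivity)).congr_deriv ?_
  field_simp
  ring

theorem radialCalibration_riccati_le {ζ r : ℝ} (hζ : 0 ≤ ζ) (hr : 0 ≤ r) :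
    r * (ζ * r * (√ζ * r + 4) / (√ζ * r + 2) ^ 2) + radialCalibration ζ r ^ 2 ≤ ζ * r ^ 2 := by
  rw [radialCalibration, div_pow, mul_div_assoc', ← add_div, div_le_iff₀ (by positivity)]
  have hgap : ζ * r ^ 2 * (√ζ * r + 2) ^ 2 - (r * (ζ * r * (√ζ * r + 4)) + (ζ * r ^ 2) ^ 2)
      = 3 * (ζ * r ^ 2) * (√ζ * r) := by
    linear_combination ζ * r ^ 4 * Real.sq_sqrt hζ
  have : 0 ≤ 3 * (ζ * r ^ 2) * (√ζ * r) := by positivity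
  linarith

theorem radialCalibration_mul_one_add_sq {ζ R : ℝ} (hζ : 0 < ζ) (hR : 0 < R) :
    radialCalibration ζ R * (1 + 2 / (√ζ * R)) ^ 2 = √ζ * R + 2 := by
  have ht : 0 < √ζ := Real.sqrt_pos.2 hζ
  rw [radialCalibration, div_mul_eq_mul_div, div_eq_iff (by positivity)]
  field_simp
  linear_combination -Real.sq_sqrt hζ.le

section Ray

variable {E : Type*} [NormedAddCommGroup E] [NormedSpace ℝ E]

theorem uniqueDiffOn_closedBall (x : E) {r : ℝ} (hr : 0 < r) :
    UniqueDiffOn ℝ (closedBall x r) :=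
  uniqueDiffOn_convex (convex_closedBall x r) (by simp [interior_closedBall x hr.ne', hr])

theorem hasDerivAt_comp_smul_of_contDiffOn {w : E → ℝ} {R : ℝ}
    (hw : ContDiffOn ℝ 1 w (closedBall 0 R)) {u : E} (hu : ‖u‖ = 1) {r : ℝ} (hr : r ∈ Ioo 0 R) :
    HasDerivAt (fun r : ℝ => w (r • u)) (fderivWithin ℝ w (closedBall 0 R) (r • u) u) r := by
  have hnhds : closedBall (0 : E) R ∈ 𝓝 (r • u) := closedBall_mem_nhds_of_mem <| by
    rw [mem_ball_zero_iff, norm_smul, hu, mul_one, Real.norm_of_nonneg hr.1.le]; exact hr.2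
  have hw' := (hw.differentiableOn one_ne_zero _
    (mem_of_mem_nhds hnhds)).hasFDerivWithinAt.hasFDerivAt hnhds
  exact hw'.comp_hasDerivAt r (by simpa using (hasDerivAt_id r).smul_const u)

theorem radialCalibration_mul_sq_le_integral_ray {w : E → ℝ} {ζ R : ℝ} (hζ : 0 ≤ ζ)
    (hR : 0 < R) (hw : ContDiffOn ℝ 1 w (closedBall 0 R)) {u : E} (hu : ‖u‖ = 1) (c : ℝ) :
    radialCalibration ζ R * (w (R • u) - c) ^ 2 ≤ ∫ r in Ioo 0 R,
      r * (‖fderivWithin ℝ w (closedBall 0 R) (r • u)‖ ^ 2 + ζ * (w (r • u) - c) ^ 2) := by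
  set L := fderivWithin ℝ w (closedBall 0 R)
  have hmaps : MapsTo (fun r : ℝ => r • u) (Icc 0 R) (closedBall 0 R) := fun r hr => by
    rw [mem_closedBall_zero_iff, norm_smul, hu, mul_one, Real.norm_of_nonneg hr.1]; exact hr.2
  have hray : Continuous fun r : ℝ => r • u := continuous_id.smul continuous_const
  have hφ : ContinuousOn (fun r => w (r • u) - c) (Icc 0 R) :=
    (hw.continuousOn.comp hray.continuousOn hmaps).sub continuousOn_const
  have hL : ContinuousOn (fun r => L (r • u)) (Icc 0 R) :=
    (hw.continuousOn_fderivWithin (uniqueDiffOn_closedBall 0 hR) le_rfl).comp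
      hray.continuousOn hmaps
  have hφ' : ContinuousOn (fun r => L (r • u) u) (Icc 0 R) := hL.clm_apply continuousOn_const
  have hφd : ∀ r ∈ Ioo 0 R, HasDerivAt (fun r => w (r • u) - c) (L (r • u) u) r := fun r hr =>
    (hasDerivAt_comp_smul_of_contDiffOn hw hu hr).sub_const c
  have hq := fun r (hr : r ∈ Icc 0 R) => hasDerivAt_radialCalibration (ζ := ζ) hr.1
  have hq' : ContinuousOn (fun r => ζ * r * (√ζ * r + 4) / (√ζ * r + 2) ^ 2) (Icc 0 R) :=
    ContinuousOn.div (by fun_prop) (by fun_prop) fun r hr => by have := hr.1; positivity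
  have hcalib := sub_le_integral_of_riccati le_rfl hR.le hφ hφ'
    (fun r hr => (hq r hr).continuousAt.continuousWithinAt) hq' hφd
    (fun r hr => hq r (Ioo_subset_Icc_self hr))
    (fun r hr => radialCalibration_riccati_le hζ hr.1.le)
  have hdir : ∀ r : ℝ, L (r • u) u ^ 2 ≤ ‖L (r • u)‖ ^ 2 := fun r => by
    have h := (L (r • u)).le_opNorm u
    rw [hu, mul_one] at h
    simpa only [Real.norm_eq_abs, sq_abs] using pow_le_pow_left₀ (norm_nonneg _) h 2
  calc radialCalibration ζ R * (w (R • u) - c) ^ 2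
      = radialCalibration ζ R * (w (R • u) - c) ^ 2
        - radialCalibration ζ 0 * (w ((0 : ℝ) • u) - c) ^ 2 := by simp [radialCalibration]
    _ ≤ ∫ r in 0..R, r * (L (r • u) u ^ 2 + ζ * (w (r • u) - c) ^ 2) := hcalib
    _ ≤ ∫ r in 0..R, r * (‖L (r • u)‖ ^ 2 + ζ * (w (r • u) - c) ^ 2) := by
      refine intervalIntegral.integral_mono_on hR.le ?_ ?_ fun r hr => ?_
      · exact (continuousOn_id.mul ((hφ'.pow 2).add (continuousOn_const.mul (hφ.pow 2))))
          |>.intervalIntegrable_of_Icc hR.le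
      · exact (continuousOn_id.mul ((hL.norm.pow 2).add (continuousOn_const.mul (hφ.pow 2))))
          |>.intervalIntegrable_of_Icc hR.le
      · exact mul_le_mul_of_nonneg_left (add_le_add_left (hdir r) _) hr.1
    _ = _ := by rw [intervalIntegral.integral_of_le hR.le, integral_Ioc_eq_integral_Ioo]

end Ray

namespace MeasureTheory

theorem setIntegral_sub_const_sq {α : Type*} [MeasurableSpace α] {μ : Measure α} {s : Set α}
    {f : α → ℝ} (hs : μ s ≠ ⊤) (hf : IntegrableOn f s μ)
    (hf2 : IntegrableOn (fun x => f x ^ 2) s μ) (hmean : ∫ x in s, f x ∂μ = 0) (c : ℝ) :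
    ∫ x in s, (f x - c) ^ 2 ∂μ = ∫ x in s, f x ^ 2 ∂μ + c ^ 2 * μ.real s := by
  have hexpand : ∀ x, (f x - c) ^ 2 = f x ^ 2 - 2 * c * f x + c ^ 2 := fun x => by ring
  have hlin : IntegrableOn (fun x => 2 * c * f x) s μ := hf.const_mul _
  have hquad : IntegrableOn (fun x => f x ^ 2 - 2 * c * f x) s μ := hf2.sub hlin
  simp_rw [hexpand]
  rw [integral_add hquad (integrableOn_const hs), integral_sub hf2 hlin, integral_const_mul, hmean,
    setIntegral_const, smul_eq_mul]
  ring

theorem integral_volumeIoiPow (n : ℕ) (g : ℝ → ℝ) :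
    ∫ r, g r ∂(Measure.volumeIoiPow n) = ∫ r in Ioi (0 : ℝ), r ^ n * g r := by
  rw [Measure.volumeIoiPow, ← integral_subtype_comap measurableSet_Ioi]
  simp only [ENNReal.ofReal]
  rw [integral_withDensity_eq_integral_smul (by fun_prop)]
  refine integral_congr_ae (ae_of_all _ fun r => ?_)
  simp only [NNReal.smul_def, Real.coe_toNNReal _ (pow_nonneg r.2.out.le _), smul_eq_mul]

section Polar

variable {E : Type*} [NormedAddCommGroup E] [NormedSpace ℝ E] [FiniteDimensional ℝ E]
  [MeasurableSpace E] [BorelSpace E] [Nontrivial E] (μ : Measure E) [μ.IsAddHaarMeasure]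

theorem setIntegral_ball_eq_integral_sphere {F : E → ℝ} {R : ℝ}
    (hF : IntegrableOn F (ball 0 R) μ) :
    Integrable (fun u : sphere (0 : E) 1 =>
        ∫ r in Ioo (0 : ℝ) R, r ^ (Module.finrank ℝ E - 1) * F (r • (u : E))) μ.toSphere ∧
      ∫ x in ball 0 R, F x ∂μ = ∫ u : sphere (0 : E) 1,
        (∫ r in Ioo (0 : ℝ) R, r ^ (Module.finrank ℝ E - 1) * F (r • (u : E))) ∂μ.toSphere := by
  set n := Module.finrank ℝ E - 1
  set G := (ball (0 : E) R).indicator F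
  set H : sphere (0 : E) 1 × Ioi (0 : ℝ) → ℝ := fun p => G (p.2.1 • p.1.1)
  have hΦ := μ.measurePreserving_homeomorphUnitSphereProd
  have hemb := (homeomorphUnitSphereProd E).measurableEmbedding
  have hHΦ : H ∘ homeomorphUnitSphereProd E = G ∘ Subtype.val := by
    funext x
    simp only [H, Function.comp_apply, ← homeomorphUnitSphereProd_symm_apply_coe,
      Homeomorph.symm_apply_apply]
  have hH : Integrable H (μ.toSphere.prod (Measure.volumeIoiPow n)) := by
    rw [← hΦ.integrable_comp_emb hemb, hHΦ,
      ← integrableOn_iff_comap_subtypeVal (measurableSet_singleton _).compl]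
    exact ((integrable_indicator_iff measurableSet_ball).2 hF).integrableOn
  have hinner : ∀ u : sphere (0 : E) 1, ∫ r, H (u, r) ∂(Measure.volumeIoiPow n)
      = ∫ r in Ioo (0 : ℝ) R, r ^ n * F (r • (u : E)) := by
    intro u
    rw [integral_volumeIoiPow n (fun r => G (r • (u : E))), ← Ioi_inter_Iio,
      ← setIntegral_indicator measurableSet_Iio]
    refine setIntegral_congr_fun measurableSet_Ioi fun r (hr : 0 < r) => ?_
    have hru : r • (u : E) ∈ ball 0 R ↔ r ∈ Iio R := by
      rw [mem_ball_zero_iff, norm_smul, norm_eq_of_mem_sphere u, mul_one,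
        Real.norm_of_nonneg hr.le, mem_Iio]
    by_cases hrR : r ∈ Iio R
    · simp only [G, indicator_of_mem hrR, indicator_of_mem (hru.2 hrR)]
    · simp only [G, indicator_of_notMem hrR, indicator_of_notMem (mt hru.1 hrR), mul_zero]
  refine ⟨by simpa only [hinner] using hH.integral_prod_left, ?_⟩
  calc ∫ x in ball 0 R, F x ∂μ = ∫ x : ({0}ᶜ : Set E), G x ∂(μ.comap Subtype.val) := by
        rw [integral_subtype_comap (measurableSet_singleton _).compl, restrict_compl_singleton,
          integral_indicator measurableSet_ball]
    _ = ∫ p, H p ∂(μ.toSphere.prod (Measure.volumeIoiPow n)) := by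
        rw [← hΦ.integral_comp hemb]
        exact congrArg (integral _) hHΦ.symm
    _ = _ := by
        rw [integral_prod H hH]
        simp only [hinner]

theorem toSphere_real_mul_le_setIntegral_ball {F : E → ℝ} {R c : ℝ}
    (hF : IntegrableOn F (ball 0 R) μ)
    (hc : ∀ u : E, ‖u‖ = 1 →
      c ≤ ∫ r in Ioo (0 : ℝ) R, r ^ (Module.finrank ℝ E - 1) * F (r • u)) :
    μ.toSphere.real univ * c ≤ ∫ x in ball 0 R, F x ∂μ := by
  obtain ⟨hint, heq⟩ := setIntegral_ball_eq_integral_sphere μ hF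
  rw [heq, ← smul_eq_mul, ← integral_const]
  exact integral_mono (integrable_const c) hint fun u => hc u (norm_eq_of_mem_sphere u)

end Polar

theorem toSphere_real_mul_le_setIntegral_energy {E : Type*} [NormedAddCommGroup E]
    [NormedSpace ℝ E] [FiniteDimensional ℝ E] [MeasurableSpace E] [BorelSpace E]
    (μ : Measure E) [μ.IsAddHaarMeasure] (hdim : Module.finrank ℝ E = 2) {w : E → ℝ} {ζ R : ℝ}
    (hζ : 0 ≤ ζ) (hR : 0 < R) (hw : ContDiffOn ℝ 1 w (closedBall 0 R))
    (hbdry : ∀ x : E, ‖x‖ = R → w x = 1) (c : ℝ) :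
    μ.toSphere.real univ * (radialCalibration ζ R * (1 - c) ^ 2) ≤
      ∫ x in ball 0 R, ‖fderivWithin ℝ w (closedBall 0 R) x‖ ^ 2 + ζ * (w x - c) ^ 2 ∂μ := by
  have : Nontrivial E := Module.nontrivial_of_finrank_eq_succ hdim
  have hF : ContinuousOn (fun x => ‖fderivWithin ℝ w (closedBall 0 R) x‖ ^ 2 + ζ * (w x - c) ^ 2)
      (closedBall 0 R) :=
    ((hw.continuousOn_fderivWithin (uniqueDiffOn_closedBall 0 hR) le_rfl).norm.pow 2).add
      (continuousOn_const.mul ((hw.continuousOn.sub continuousOn_const).pow 2))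
  refine toSphere_real_mul_le_setIntegral_ball μ
    ((hF.integrableOn_compact (isCompact_closedBall 0 R)).mono_set ball_subset_closedBall)
    fun u hu => ?_
  have hRu : ‖R • u‖ = R := by rw [norm_smul, hu, mul_one, Real.norm_of_nonneg hR.le]
  simpa [hdim, hbdry _ hRu] using radialCalibration_mul_sq_le_integral_ray hζ hR hw hu c

end MeasureTheory

theorem norm_gradient_eq_norm_fderivWithin {F : Type*} [NormedAddCommGroup F]
    [InnerProductSpace ℝ F] [CompleteSpace F] {f : F → ℝ} {s : Set F} {x : F} (hs : s ∈ 𝓝 x) :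
    ‖gradient f x‖ = ‖fderivWithin ℝ f s x‖ := by
  rw [fderivWithin_of_mem_nhds hs, ← toDual_gradient, LinearIsometryEquiv.norm_map]

theorem EuclideanSpace.volume_real_ball_fin_two {r : ℝ} (hr : 0 ≤ r) :
    volume.real (ball (0 : EuclideanSpace ℝ (Fin 2)) r) = Real.pi * r ^ 2 := by
  simp [Measure.real, ENNReal.toReal_ofReal hr, Real.pi_nonneg, mul_comm]

theorem two_pi_mul_radialCalibration_le_energy {w : EuclideanSpace ℝ (Fin 2) → ℝ} {ζ R : ℝ}
    (hζ : 0 ≤ ζ) (hR : 0 < R) (hw : ContDiffOn ℝ 1 w (closedBall 0 R))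
    (hmean : ∫ x in ball 0 R, w x = 0) (hbdry : ∀ x, ‖x‖ = R → w x = 1) (c : ℝ) :
    2 * Real.pi * (radialCalibration ζ R * (1 - c) ^ 2) ≤ (∫ x in ball 0 R, ‖gradient w x‖ ^ 2)
      + ζ * ((∫ x in ball 0 R, w x ^ 2) + c ^ 2 * (Real.pi * R ^ 2)) := by
  set B := ball (0 : EuclideanSpace ℝ (Fin 2)) R
  set L := fderivWithin ℝ w (closedBall 0 R)
  have hint : ∀ f : EuclideanSpace ℝ (Fin 2) → ℝ, ContinuousOn f (closedBall 0 R) →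
      IntegrableOn f B := fun f hf =>
    (hf.integrableOn_compact (isCompact_closedBall 0 R)).mono_set ball_subset_closedBall
  have hL2 : IntegrableOn (fun x => ‖L x‖ ^ 2) B :=
    hint _ ((hw.continuousOn_fderivWithin (uniqueDiffOn_closedBall 0 hR) le_rfl).norm.pow 2)
  have hwc2 : IntegrableOn (fun x => ζ * (w x - c) ^ 2) B :=
    (hint _ ((hw.continuousOn.sub continuousOn_const).pow 2)).const_mul ζ
  have hgrad : ∫ x in B, ‖gradient w x‖ ^ 2 = ∫ x in B, ‖L x‖ ^ 2 :=
    setIntegral_congr_fun measurableSet_ball fun x hx => by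
      rw [norm_gradient_eq_norm_fderivWithin (closedBall_mem_nhds_of_mem hx)]
  have hbound := toSphere_real_mul_le_setIntegral_energy volume (by simp) hζ hR hw hbdry c
  rw [integral_add hL2 hwc2, integral_const_mul,
    setIntegral_sub_const_sq measure_ball_lt_top.ne (hint _ hw.continuousOn)
      (hint _ (hw.continuousOn.pow 2)) hmean, Measure.toSphere_real_apply_univ,
    EuclideanSpace.volume_real_ball_fin_two hR.le,
    EuclideanSpace.volume_real_ball_fin_two zero_le_one] at hbound
  simpa [hgrad] using hbound

/-- Let `R > 0` and `ζ > 0`. For every `w ∈ C¹(B̄_R;ℝ)` with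
`∫_{B_R} w dxdy = 0` and `w = 1` on the boundary circle `|x| = R`, one has
`∫_{B_R} |∇w|² dxdy + ζ ∫_{B_R} w² dxdy ≥ 2π √ζ R`. -/
theorem constrained_dirichlet_energy_lower_bound
    (R ζ : ℝ) (hR : 0 < R) (hζ : 0 < ζ)
    (w : EuclideanSpace ℝ (Fin 2) → ℝ)
    (hw : ContDiffOn ℝ 1 w (closedBall 0 R))
    (hmean : (∫ x in ball (0 : EuclideanSpace ℝ (Fin 2)) R, w x) = 0)
    (hbdry : ∀ x : EuclideanSpace ℝ (Fin 2), ‖x‖ = R → w x = 1) :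
    2 * Real.pi * Real.sqrt ζ * R
      ≤ (∫ x in ball (0 : EuclideanSpace ℝ (Fin 2)) R, ‖gradient w x‖^2)
          + ζ * ∫ x in ball (0 : EuclideanSpace ℝ (Fin 2)) R, (w x)^2 := by
  -- `c = -2 / (√ζ R)` maximises `2π · radialCalibration ζ R · (1 - c)² - π ζ c² R²`.
  have hbound := two_pi_mul_radialCalibration_le_energy hζ.le hR hw hmean hbdry (-2 / (√ζ * R))
  have hshift : ζ * (-2 / (√ζ * R)) ^ 2 * R ^ 2 = 4 := by
    have : √ζ * R ≠ 0 := by positivity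
    field_simp
    linear_combination -4 * Real.sq_sqrt hζ.le
  rw [sub_eq_add_neg, neg_div, neg_neg, radialCalibration_mul_one_add_sq hζ hR] at hbound
  linear_combination hbound + Real.pi * hshift
end
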